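/- In the setting of the Longo–Rehren inclusion N⊗N^opp ⊂ M with canonical endomorphism restriction λ = ⊕_k ρ_k ⊗ ρ_k^opp: the (N⊗N^opp)-M sector [ρ_i ⊗ id][γ] is irreducible, since the computation [σ][σ̄] = Σ_k [ρ_i ρ_k ρ̄_i ⊗ ρ_k^opp] (using [γ][ι] = [λ]) contains the identity sector exactly once; moreover [ρ_i ⊗ id][γ] = [id ⊗ ρ̄_i^opp][γ], since ⟨[σ],[σ']⟩ = Σ_k ⟨ρ_i ρ_k ⊗ ρ_k^opp ρ_i^opp, id⟩ = 1. -/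
import Mathlib


open Finset

/-- Multiplicity of `ρ_k` in the product `ρ_{i₁} ⋯ ρ_{i_n}` of basis elements of a fusion ring
with structure constants `N` and unit index `zero`. -/
def NlistLR {ι : Type*} [Fintype ι] [DecidableEq ι] (N : ι → ι → ι → ℕ) (zero : ι) :
    List ι → ι → ℕ
  | [], k => if k = zero then 1 else 0
  | (i :: l), k => ∑ j, NlistLR N zero l j * N i j k

/-- For the Longo–Rehren inclusion `N⊗N^opp ⊂ M` with
`λ = ⊕_k ρ_k ⊗ ρ_k^opp`, the `(N⊗N^opp)`-`M` sector `σ = [ρ_i ⊗ id][γ]` is irreducible: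
`⟨σ, σ⟩ = ⟨[σ][σ̄], id⟩ = Σ_k ⟨ρ_i ρ_k ρ̄_i ⊗ ρ_k^opp, id ⊗ id⟩
       = Σ_k N_{[i,k,ī]}^0 · δ_{k,0} = 1`;
moreover `[ρ_i ⊗ id][γ] = [id ⊗ ρ̄_i^opp][γ]`, since
`⟨σ, σ'⟩ = Σ_k ⟨ρ_i ρ_k ⊗ ρ_k^opp ρ_i^opp, id ⊗ id⟩ = Σ_k (N_{ik}^0)² = 1`.
Both multiplicity computations are expressed here in the fusion ring of the system `{ρ_i}`. -/
theorem LR_sector_irreducible_and_equal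
    {ι : Type*} [Fintype ι] [DecidableEq ι]
    (N : ι → ι → ι → ℕ) (zero : ι) (bar : ι → ι)
    (hbar : Function.Involutive bar)
    (hN0 : ∀ i j, N i j zero = if j = bar i then 1 else 0)
    (hid_l : ∀ i k, N zero i k = if k = i then 1 else 0)
    (hid_r : ∀ i k, N i zero k = if k = i then 1 else 0)
    (hassoc : ∀ i j k l, ∑ p, N i j p * N p k l = ∑ q, N j k q * N i q l)
    (i : ι) :
    -- irreducibility of `[ρ_i ⊗ id][γ]`: the identity appears exactly once in `[σ][σ̄]`
    (∑ k, NlistLR N zero [i, k, bar i] zero * (if k = zero then 1 else 0) = 1) ∧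
    -- `[ρ_i ⊗ id][γ] = [id ⊗ ρ̄_i^opp][γ]`: `⟨σ, σ'⟩ = 1`
    (∑ k, N i k zero * N i k zero = 1) := by
  constructor
  · simp only [NlistLR, mul_ite, mul_one, mul_zero, Finset.sum_ite_eq',
      Finset.mem_univ, if_true, hN0, hid_l, hid_r]
    simp [Finset.sum_ite_eq', Finset.sum_ite_eq, hid_r]
  · simp [hN0, Finset.sum_ite_eq']
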